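/- For every n ≥ 1, the lecture hall cone L_n equals the set of all nonnegative real linear combinations of the n vectors u_1, …, u_n ∈ ℤ^n, where u_n := (0, …, 0, 1) and, for 1 ≤ k ≤ n−1, u_k is the vector whose j-th coordinate is j for k ≤ j ≤ n and 0 for j < k, i.e., u_k = (0, …, 0, k, k+1, …, n). (These vectors are the minimal ray generators of L_n.) -/

import Mathlib

/-!
Encode `x ∈ ℝⁿ` by its ratio sequence `q = (0, x₁/1, x₂/2, …, xₙ/n)`. The lecture hall inequalities
say exactly that `q` is monotone, i.e. that `q` is the sequence of partial sums of a nonnegative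
vector. The ratio sequence of `u_k` is a step from `0` up to `1` at position `k` (up to `1/n` for
`u_n`), so the ratio sequence of `∑ c_k u_k` is the sequence of partial sums of the `c_k` rescaled by
these jumps. Since `x ↦ q` is injective, the nonnegative combinations of the `u_k` are exactly the
vectors whose ratio sequence is monotone.
-/

/-- Membership in the (real) lecture hall cone
`L_n = {λ ∈ ℝⁿ : 0 ≤ λ_1/1 ≤ λ_2/2 ≤ ⋯ ≤ λ_n/n}`. -/
def IsLectureHallReal (n : ℕ) (l : Fin n → ℝ) : Prop :=
  (∀ h : 0 < n, 0 ≤ l ⟨0, h⟩) ∧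
  ∀ i : ℕ, ∀ h : i + 1 < n,
    ((i : ℝ) + 1) * l ⟨i + 1, h⟩ ≥ ((i : ℝ) + 2) * l ⟨i, by omega⟩

/-- The minimal ray generators of `L_n` (indexed by `k : Fin n`, where `k` corresponds to
the `1`-based index `k+1`): `u_n = (0,…,0,1)`, and for `1 ≤ k ≤ n-1`,
`u_k = (0,…,0,k,k+1,…,n)`, i.e. the `j`-th coordinate is `j` for `k ≤ j ≤ n` and `0`
otherwise. -/
def rayGen (n : ℕ) (k : Fin n) : Fin n → ℝ :=
  if (k : ℕ) = n - 1 then fun j => if (j : ℕ) = n - 1 then 1 else 0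
  else fun j => if (k : ℕ) ≤ (j : ℕ) then ((j : ℕ) + 1 : ℝ) else 0

namespace Fin

theorem partialSum_apply_eq_sum {M : Type*} [AddCommMonoid M] {n : ℕ} (f : Fin n → M)
    (i : Fin (n + 1)) :
    partialSum f i = ∑ k, if k.castSucc < i then f k else 0 := by
  induction i using Fin.induction with
  | zero => simp
  | succ i ih =>
    rw [partialSum_succ, ih, ← Fintype.sum_ite_eq' i f, ← Finset.sum_add_distrib]
    refine Finset.sum_congr rfl fun k _ => ?_
    rcases lt_trichotomy k i with h | rfl | h
    · simp [h, h.le, h.ne]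
    · simp
    · simp [lt_asymm h, not_le.2 h, h.ne']

theorem monotone_iff_exists_nonneg_partialSum {α : Type*} [AddCommGroup α] [PartialOrder α]
    [IsOrderedAddMonoid α] {n : ℕ} {f : Fin (n + 1) → α} (hf : f 0 = 0) :
    Monotone f ↔ ∃ d, 0 ≤ d ∧ partialSum d = f := by
  rw [monotone_iff_le_succ]
  constructor
  · intro hmono
    refine ⟨fun i => -f i.castSucc + f i.succ, fun i => ?_, ?_⟩
    · simpa [le_neg_add_iff_add_le] using hmono i
    · simpa [hf] using partialSum_left_neg f
  · rintro ⟨d, hd, rfl⟩ i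
    rw [partialSum_succ]
    exact le_add_of_nonneg_right (hd i)

end Fin

noncomputable section LectureHall

variable {n : ℕ}

def lectureHallRatios (x : Fin n → ℝ) : Fin (n + 1) → ℝ :=
  Fin.cons 0 fun j => x j / ((j : ℝ) + 1)

theorem lectureHallRatios_zero (x : Fin n → ℝ) : lectureHallRatios x 0 = 0 := rfl

theorem lectureHallRatios_succ (x : Fin n → ℝ) (j : Fin n) :
    lectureHallRatios x j.succ = x j / ((j : ℝ) + 1) := rfl

theorem lectureHallRatios_injective : Function.Injective (lectureHallRatios (n := n)) := by
  intro x y h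
  funext j
  have := congrFun h j.succ
  rw [lectureHallRatios_succ, lectureHallRatios_succ] at this
  exact (div_left_inj' (by positivity)).1 this

theorem isLectureHallReal_iff_monotone (x : Fin n → ℝ) :
    IsLectureHallReal n x ↔ Monotone (lectureHallRatios x) := by
  have step_iff : ∀ (i : ℕ) (a b : ℝ), a / ((i : ℕ) + 1 : ℝ) ≤ b / (((i + 1 : ℕ) : ℝ) + 1) ↔
      ((i : ℝ) + 2) * a ≤ ((i : ℝ) + 1) * b := by
    intro i a b
    rw [div_le_div_iff₀ (by positivity) (by positivity)]
    push_cast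
    constructor <;> intro h <;> linarith
  rw [Fin.monotone_iff_le_succ, IsLectureHallReal]
  constructor
  · rintro ⟨hzero, hstep⟩ ⟨_ | i, hi⟩
    · show (0 : ℝ) ≤ x ⟨0, hi⟩ / ((0 : ℕ) + 1)
      simpa using hzero hi
    · exact (step_iff i _ _).2 (hstep i hi)
  · intro h
    refine ⟨fun hn => ?_, fun i hi => (step_iff i _ _).1 (h ⟨i + 1, hi⟩)⟩
    have : (0 : ℝ) ≤ x ⟨0, hn⟩ / ((0 : ℕ) + 1) := h ⟨0, hn⟩
    simpa using this

def rayGenJump (n : ℕ) (k : Fin n) : ℝ :=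
  if (k : ℕ) = n - 1 then (n : ℝ)⁻¹ else 1

theorem rayGenJump_pos (k : Fin n) : 0 < rayGenJump n k := by
  unfold rayGenJump
  split_ifs
  · have : 0 < n := k.pos
    positivity
  · exact one_pos

theorem rayGen_apply_div (k j : Fin n) :
    rayGen n k j / ((j : ℝ) + 1) = if k ≤ j then rayGenJump n k else 0 := by
  rcases eq_or_ne (k : ℕ) (n - 1) with hk | hk
  · have hkj : k ≤ j ↔ (j : ℕ) = n - 1 := by
      rw [Fin.le_iff_val_le_val]
      omega
    simp only [rayGen, rayGenJump, hk, if_true, hkj]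
    split_ifs with hj
    · have : ((j : ℕ) : ℝ) + 1 = n := by
        norm_cast
        omega
      rw [this, one_div]
    · exact zero_div _
  · simp only [rayGen, rayGenJump, hk, if_false, Fin.le_iff_val_le_val]
    split_ifs
    · exact div_self (by positivity)
    · exact zero_div _

theorem lectureHallRatios_sum_smul_rayGen (c : Fin n → ℝ) :
    lectureHallRatios (∑ k, c k • rayGen n k) =
      Fin.partialSum fun k => c k * rayGenJump n k := by
  funext i
  rw [Fin.partialSum_apply_eq_sum]
  induction i using Fin.cases with
  | zero => simp [lectureHallRatios_zero]
  | succ j =>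
    simp only [lectureHallRatios_succ, Finset.sum_apply, Pi.smul_apply, smul_eq_mul,
      Finset.sum_div, mul_div_assoc, rayGen_apply_div, Fin.castSucc_lt_succ_iff]
    simp [mul_ite]

end LectureHall

theorem lectureHallCone_eq_nonneg_combinations_general (n : ℕ) :
    {l : Fin n → ℝ | IsLectureHallReal n l} =
      {x : Fin n → ℝ | ∃ c : Fin n → ℝ, (∀ k, 0 ≤ c k) ∧
        x = ∑ k, c k • rayGen n k} := by
  ext x
  rw [Set.mem_ofPred_eq, Set.mem_ofPred_eq, isLectureHallReal_iff_monotone,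
    Fin.monotone_iff_exists_nonneg_partialSum (lectureHallRatios_zero x)]
  constructor
  · rintro ⟨d, hd, hx⟩
    refine ⟨fun k => d k / rayGenJump n k,
      fun k => div_nonneg (hd k) (rayGenJump_pos k).le, lectureHallRatios_injective ?_⟩
    rw [lectureHallRatios_sum_smul_rayGen, ← hx]
    congr 1 with k
    exact (div_mul_cancel₀ _ (rayGenJump_pos k).ne').symm
  · rintro ⟨c, hc, rfl⟩
    exact ⟨_, fun k => mul_nonneg (hc k) (rayGenJump_pos k).le,
      (lectureHallRatios_sum_smul_rayGen c).symm⟩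

/-- For every `n ≥ 1`, the lecture hall cone `L_n` is the set of nonnegative real linear
combinations of the vectors `u_1, …, u_n`. -/
theorem lectureHallCone_eq_nonneg_combinations (n : ℕ) (hn : 1 ≤ n) :
    {l : Fin n → ℝ | IsLectureHallReal n l} =
      {x : Fin n → ℝ | ∃ c : Fin n → ℝ, (∀ k, 0 ≤ c k) ∧
        x = ∑ k, c k • rayGen n k} :=
  lectureHallCone_eq_nonneg_combinations_general n
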